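/- arXiv:2008.11581 — 6 statements merged into one kernel-verified Lean document; each statement's English description precedes it below -/
import Mathlib

section
/- Let P be a Markov kernel on a measurable space (E, 𝓔). If P admits more than one invariant probability measure, then P admits two invariant probability measures that are mutually singular. -/
/-!
For finite measures the truncated difference `μ - ν` is the positive part of the signed measure
`μ - ν`, so `μ ≤ (μ - ν) + ν`. If `μ` and `ν` are invariant, applying `P` gives
`μ ≤ P(μ - ν) + ν`, hence `μ - ν ≤ P(μ - ν)` by minimality of `μ - ν`; a Markov kernel preserves
total mass, so this is an equality and `μ - ν` is invariant. Likewise `ν - μ`; both are nonzero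
when `μ ≠ ν` and they are mutually singular (Hahn decomposition), so their normalisations work.
-/

open MeasureTheory ProbabilityTheory

/-- `μ` is an invariant probability measure of the Markov kernel `P`:
`μ(A) = ∫ P(x,A) dμ(x)` for all measurable `A`. -/
def IsInvariantMeasure {E : Type*} [MeasurableSpace E] (P : Kernel E E)
    (μ : Measure E) : Prop :=
  ∀ A : Set E, MeasurableSet A → μ A = ∫⁻ x, P x A ∂μ

/-- Two probability measures are mutually singular if some measurable set has
full measure for the first and zero measure for the second. -/
def MutuallySingularMeasures {E : Type*} [MeasurableSpace E]
    (μ ν : Measure E) : Prop :=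
  ∃ C : Set E, MeasurableSet C ∧ μ C = 1 ∧ ν C = 0

namespace MeasureTheory.Measure

variable {α : Type*} {mα : MeasurableSpace α} {μ ν : Measure α}

theorem le_sub_add [IsFiniteMeasure μ] [IsFiniteMeasure ν] : μ ≤ μ - ν + ν := by
  obtain ⟨s, hs⟩ := exists_isHahnDecomposition μ ν
  have hs_meas := hs.measurableSet
  have h_on : μ.restrict s ≤ (μ - ν + ν).restrict s := by
    rw [restrict_add]
    exact Measure.le_add_left hs.le_on
  have h_on_compl : μ.restrict sᶜ = (μ - ν + ν).restrict sᶜ := by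
    rw [restrict_add, restrict_sub_eq_restrict_sub_restrict hs_meas.compl,
      sub_add_cancel_of_le hs.ge_on_compl]
  calc μ = μ.restrict s + μ.restrict sᶜ := (restrict_add_restrict_compl hs_meas).symm
    _ ≤ (μ - ν + ν).restrict s + (μ - ν + ν).restrict sᶜ := add_le_add h_on h_on_compl.le
    _ = μ - ν + ν := restrict_add_restrict_compl hs_meas

theorem sub_eq_zero_iff_le [IsFiniteMeasure μ] [IsFiniteMeasure ν] : μ - ν = 0 ↔ μ ≤ ν :=
  ⟨fun h ↦ by simpa [h] using le_sub_add (μ := μ) (ν := ν), sub_eq_zero_of_le⟩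

theorem comp_mono {β : Type*} {mβ : MeasurableSpace β} (κ : Kernel α β) (h : μ ≤ ν) :
    κ ∘ₘ μ ≤ κ ∘ₘ ν :=
  le_intro fun s hs _ ↦ by
    rw [bind_apply hs κ.aemeasurable, bind_apply hs κ.aemeasurable]
    exact lintegral_mono' h le_rfl

theorem sub_ne_zero_of_ne [IsProbabilityMeasure μ] [IsProbabilityMeasure ν] (h : μ ≠ ν) :
    μ - ν ≠ 0 :=
  fun h_zero ↦ h (eq_of_le_of_isProbabilityMeasure (sub_eq_zero_iff_le.mp h_zero))

end MeasureTheory.Measure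

namespace ProbabilityTheory.Kernel

variable {α : Type*} {mα : MeasurableSpace α} {κ : Kernel α α} {μ ν : Measure α}

theorem Invariant.smul (hμ : κ.Invariant μ) (c : ENNReal) : κ.Invariant (c • μ) := by
  rw [Invariant, Measure.bind_smul, hμ.def]

theorem Invariant.sub [IsMarkovKernel κ] [IsFiniteMeasure μ] [IsFiniteMeasure ν]
    (hμ : κ.Invariant μ) (hν : κ.Invariant ν) : κ.Invariant (μ - ν) := by
  have h_le : μ ≤ κ ∘ₘ (μ - ν) + ν :=
    calc μ = κ ∘ₘ μ := hμ.def.symm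
      _ ≤ κ ∘ₘ (μ - ν + ν) := Measure.comp_mono κ Measure.le_sub_add
      _ = κ ∘ₘ (μ - ν) + ν := by rw [Measure.comp_add, hν.def]
  exact (Measure.eq_of_le_of_measure_univ_eq (Measure.sub_le_of_le_add h_le)
    Measure.comp_apply_univ.symm).symm

end ProbabilityTheory.Kernel

theorem isInvariantMeasure_iff_invariant {E : Type*} [MeasurableSpace E] {P : Kernel E E}
    {μ : Measure E} : IsInvariantMeasure P μ ↔ P.Invariant μ := by
  rw [Kernel.Invariant, Measure.ext_iff]
  exact forall₂_congr fun A hA ↦ by rw [Measure.bind_apply hA P.aemeasurable, eq_comm]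

theorem MeasureTheory.Measure.MutuallySingular.mutuallySingularMeasures {E : Type*}
    [MeasurableSpace E] {μ ν : Measure E} [IsProbabilityMeasure μ] (h : μ ⟂ₘ ν) :
    MutuallySingularMeasures μ ν := by
  obtain ⟨s, hs, hμs, hνs⟩ := h
  exact ⟨sᶜ, hs.compl, by rw [prob_compl_eq_one_sub hs, hμs, tsub_zero], hνs⟩

/-- If a Markov kernel admits more than one invariant probability measure, then
it admits two mutually singular invariant probability measures. -/
theorem exists_mutually_singular_invariant_of_two_invariant
    {E : Type*} [MeasurableSpace E] (P : Kernel E E) [IsMarkovKernel P]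
    (μ ν : Measure E) [IsProbabilityMeasure μ] [IsProbabilityMeasure ν]
    (hμ : IsInvariantMeasure P μ) (hν : IsInvariantMeasure P ν) (hne : μ ≠ ν) :
    ∃ μ' ν' : Measure E, IsProbabilityMeasure μ' ∧ IsProbabilityMeasure ν' ∧
      IsInvariantMeasure P μ' ∧ IsInvariantMeasure P ν' ∧
      MutuallySingularMeasures μ' ν' := by
  rw [isInvariantMeasure_iff_invariant] at hμ hν
  have : NeZero (μ - ν) := ⟨Measure.sub_ne_zero_of_ne hne⟩
  have : NeZero (ν - μ) := ⟨Measure.sub_ne_zero_of_ne hne.symm⟩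
  refine ⟨((μ - ν) .univ)⁻¹ • (μ - ν), ((ν - μ) .univ)⁻¹ • (ν - μ), inferInstance, inferInstance,
    isInvariantMeasure_iff_invariant.mpr ((hμ.sub hν).smul _),
    isInvariantMeasure_iff_invariant.mpr ((hν.sub hμ).smul _), ?_⟩
  exact ((Measure.mutually_singular_measure_sub.smul _).symm.smul _).symm.mutuallySingularMeasures
end

section
/- Let P be a Markov kernel on a measurable space (E, 𝓔) and let μ and ν be two distinct, mutually equivalent invariant probability measures of P. Let f = dμ/dν be a Radon–Nikodym density and set A := {x ∈ E : f(x) > 1}. Then μ(A), ν(A) ∈ (0,1), P(y, Aᶜ) = 0 for ν-almost all y ∈ A, P(y, A) = 0 for ν-almost all y ∈ Aᶜ, and the normalized restricted measures (1/μ(A)) μ|_A and (1/μ(Aᶜ)) μ|_{Aᶜ} are mutually singular invariant probability measures of P. -/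
/-!
Let `A = {f > 1}`. The measure `m = ν|_A + μ|_{Aᶜ}`, the minimum of `μ` and `ν`, lies below both
invariant measures, so `∫ P(·, B) dm ≤ m(B)` for every `B`; as `P` is Markov this forces `m` to be
invariant, and then so is the remainder `μ - m = (f - 1) ν|_A`. That remainder does not charge `Aᶜ`
but has positive density on `A`, so `ν`-almost no point of `A` moves to `Aᶜ`; invariance of `ν`
then shows that almost no point of `Aᶜ` moves to `A`, and `μ|_A`, `μ|_{Aᶜ}` are invariant.
Finally `ν(A) = 0` would give `μ ≤ ν` and `ν(Aᶜ) = 0` would give `ν ≤ μ`, either way `μ = ν`.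
-/

open MeasureTheory ProbabilityTheory

open scoped ENNReal

namespace IsInvariantMeasure

variable {E : Type*} [MeasurableSpace E] {P : Kernel E E} {μ ν : Measure E} {S : Set E}

theorem smul (hμ : IsInvariantMeasure P μ) (c : ℝ≥0∞) : IsInvariantMeasure P (c • μ) := by
  intro B hB
  rw [Measure.smul_apply, lintegral_smul_measure, hμ B hB, smul_eq_mul]

theorem of_add [IsFiniteMeasure μ] (hμ : IsInvariantMeasure P μ)
    (h : IsInvariantMeasure P (μ + ν)) : IsInvariantMeasure P ν := by
  intro B hB
  have := h B hB
  rw [Measure.add_apply, lintegral_add_measure, ← hμ B hB] at this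
  exact (ENNReal.add_right_inj (measure_ne_top μ B)).mp this

theorem ae_eq_zero_of_measure_eq_zero (hμ : IsInvariantMeasure P μ) (hS : MeasurableSet S)
    (h : μ S = 0) : ∀ᵐ x ∂μ, P x S = 0 :=
  (lintegral_eq_zero_iff (P.measurable_coe hS)).mp (hμ S hS ▸ h)

/-- The mass `ν S` is already carried back into `S` by the points of `S`, so none can arrive
from `Sᶜ`. -/
theorem ae_compl_eq_zero_of_ae_mem [IsMarkovKernel P] [IsFiniteMeasure ν]
    (hν : IsInvariantMeasure P ν) (hS : MeasurableSet S)
    (h : ∀ᵐ x ∂ν, x ∈ S → P x Sᶜ = 0) : ∀ᵐ x ∂ν, x ∈ Sᶜ → P x S = 0 := by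
  have hS_one : ∫⁻ x in S, P x S ∂ν = ν S := by
    rw [← setLIntegral_one]
    refine setLIntegral_congr_fun_ae hS ?_
    filter_upwards [h] with x hx hxS using (prob_compl_eq_zero_iff hS).mp (hx hxS)
  have hSc_zero : ∫⁻ x in Sᶜ, P x S ∂ν = 0 := by
    have := hν S hS
    rw [← lintegral_add_compl _ hS, hS_one] at this
    exact (ENNReal.add_right_inj (measure_ne_top ν S)).mp (this.symm.trans (add_zero _).symm)
  rw [lintegral_eq_zero_iff (P.measurable_coe hS), Filter.EventuallyEq,
    ae_restrict_iff' hS.compl] at hSc_zero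
  exact hSc_zero

theorem restrict [IsMarkovKernel P] [IsFiniteMeasure μ] (hμ : IsInvariantMeasure P μ)
    (hS : MeasurableSet S) (h : ∀ᵐ x ∂μ, x ∈ S → P x Sᶜ = 0) :
    IsInvariantMeasure P (μ.restrict S) := by
  have h' := hμ.ae_compl_eq_zero_of_ae_mem hS h
  intro B hB
  have h_in : ∫⁻ x in S, P x (B ∩ S) ∂μ = ∫⁻ x in S, P x B ∂μ := by
    refine setLIntegral_congr_fun_ae hS ?_
    filter_upwards [h] with x hx hxS using measure_inter_conull (hx hxS)
  have h_out : ∫⁻ x in Sᶜ, P x (B ∩ S) ∂μ = 0 := by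
    rw [← lintegral_zero (μ := μ.restrict Sᶜ)]
    refine setLIntegral_congr_fun_ae hS.compl ?_
    filter_upwards [h'] with x hx hxS using measure_mono_null Set.inter_subset_right (hx hxS)
  rw [Measure.restrict_apply hB, hμ _ (hB.inter hS), ← lintegral_add_compl _ hS, h_out,
    add_zero, h_in]

/-- `B` and `Bᶜ` together receive the full mass, so neither inequality can be strict. -/
theorem of_lintegral_le [IsMarkovKernel P] [IsFiniteMeasure μ]
    (h : ∀ B, MeasurableSet B → ∫⁻ x, P x B ∂μ ≤ μ B) : IsInvariantMeasure P μ := by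
  intro B hB
  refine le_antisymm ?_ (h B hB)
  have h_total : ∫⁻ x, P x B ∂μ + ∫⁻ x, P x Bᶜ ∂μ = μ B + μ Bᶜ := by
    rw [← lintegral_add_left (P.measurable_coe hB), measure_add_measure_compl hB]
    simp_rw [measure_add_measure_compl hB, measure_univ, lintegral_one]
  have : μ B + μ Bᶜ ≤ ∫⁻ x, P x B ∂μ + μ Bᶜ := h_total ▸ add_le_add le_rfl (h Bᶜ hB.compl)
  exact (ENNReal.add_le_add_iff_right (measure_ne_top μ Bᶜ)).mp this

theorem restrict_add_restrict_compl [IsMarkovKernel P] [IsFiniteMeasure μ] [IsFiniteMeasure ν]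
    (hμ : IsInvariantMeasure P μ) (hν : IsInvariantMeasure P ν) {A : Set E}
    (hA : MeasurableSet A) (hA_le : ν.restrict A ≤ μ.restrict A)
    (hAc_le : μ.restrict Aᶜ ≤ ν.restrict Aᶜ) :
    IsInvariantMeasure P (ν.restrict A + μ.restrict Aᶜ) := by
  set m := ν.restrict A + μ.restrict Aᶜ
  have hm_ν : m ≤ ν := by
    conv_rhs => rw [← ν.restrict_add_restrict_compl hA]
    exact add_le_add le_rfl hAc_le
  have hm_μ : m ≤ μ := by
    conv_rhs => rw [← μ.restrict_add_restrict_compl hA]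
    exact add_le_add hA_le le_rfl
  refine of_lintegral_le fun B hB => ?_
  calc ∫⁻ x, P x B ∂m = ∫⁻ x, P x (B ∩ A) ∂m + ∫⁻ x, P x (B ∩ Aᶜ) ∂m := by
        rw [← lintegral_add_left (P.measurable_coe (hB.inter hA))]
        simp_rw [← Set.sdiff_eq, measure_inter_add_sdiff B hA]
    _ ≤ ∫⁻ x, P x (B ∩ A) ∂ν + ∫⁻ x, P x (B ∩ Aᶜ) ∂μ :=
        add_le_add (lintegral_mono' hm_ν le_rfl) (lintegral_mono' hm_μ le_rfl)
    _ = m B := by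
        rw [← hν _ (hB.inter hA), ← hμ _ (hB.inter hA.compl), Measure.add_apply,
          Measure.restrict_apply hB, Measure.restrict_apply hB]

end IsInvariantMeasure

section Density

variable {E : Type*} [MeasurableSpace E] {μ ν : Measure E} {f : E → ℝ≥0∞}

theorem restrict_withDensity_setOf_one_lt (hf : Measurable f) :
    (ν.withDensity f).restrict {x | 1 < f x} =
      ν.restrict {x | 1 < f x} + (ν.restrict {x | 1 < f x}).withDensity (fun x => f x - 1) := by
  have hA : MeasurableSet {x | 1 < f x} := measurableSet_lt measurable_const hf
  rw [restrict_withDensity hA]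
  nth_rw 2 [← withDensity_one (μ := ν.restrict _)]
  rw [← withDensity_add_left (f := 1) measurable_const]
  refine withDensity_congr_ae ?_
  filter_upwards [ae_restrict_mem hA] with x hx using (add_tsub_cancel_of_le hx.le).symm

theorem restrict_withDensity_compl_setOf_one_lt_le (hf : Measurable f) :
    (ν.withDensity f).restrict {x | 1 < f x}ᶜ ≤ ν.restrict {x | 1 < f x}ᶜ := by
  have hA : MeasurableSet {x | 1 < f x} := measurableSet_lt measurable_const hf
  rw [restrict_withDensity hA.compl]
  conv_rhs => rw [← withDensity_one (μ := ν.restrict _)]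
  refine withDensity_mono ?_
  filter_upwards [ae_restrict_mem hA.compl] with x hx using not_lt.mp hx

theorem measure_setOf_one_lt_pos [IsProbabilityMeasure μ] [IsProbabilityMeasure ν]
    (hfμ : ν.withDensity f = μ) (hne : μ ≠ ν) : 0 < ν {x | 1 < f x} := by
  subst hfμ
  refine pos_iff_ne_zero.mpr fun h => hne ?_
  have hf_le : f ≤ᵐ[ν] 1 := by
    filter_upwards [measure_eq_zero_iff_ae_notMem.mp h] with x hx using not_lt.mp hx
  refine Measure.eq_of_le_of_measure_univ_eq ?_ (by simp)
  simpa using withDensity_mono hf_le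

theorem measure_compl_setOf_one_lt_pos [IsProbabilityMeasure μ] [IsProbabilityMeasure ν]
    (hfμ : ν.withDensity f = μ) (hne : μ ≠ ν) : 0 < ν {x | 1 < f x}ᶜ := by
  subst hfμ
  refine pos_iff_ne_zero.mpr fun h => hne ?_
  have hf_ge : 1 ≤ᵐ[ν] f := by
    filter_upwards [measure_eq_zero_iff_ae_notMem.mp h] with x hx using (not_not.mp hx).le
  refine (Measure.eq_of_le_of_measure_univ_eq ?_ (by simp)).symm
  simpa using withDensity_mono hf_ge

theorem IsInvariantMeasure.ae_kernel_compl_setOf_one_lt_eq_zero {P : Kernel E E}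
    [IsMarkovKernel P] [IsFiniteMeasure μ] [IsFiniteMeasure ν] (hf : Measurable f)
    (hfμ : ν.withDensity f = μ)
    (hν : IsInvariantMeasure P ν) (hμ : IsInvariantMeasure P μ) :
    ∀ᵐ x ∂ν, x ∈ {x | 1 < f x} → P x {x | 1 < f x}ᶜ = 0 := by
  set A := {x | 1 < f x}
  have hA : MeasurableSet A := measurableSet_lt measurable_const hf
  set α := (ν.restrict A).withDensity (fun x => f x - 1)
  have hμ_eq : μ = (ν.restrict A + μ.restrict Aᶜ) + α := by
    rw [add_right_comm, ← hfμ, ← restrict_withDensity_setOf_one_lt hf, hfμ,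
      μ.restrict_add_restrict_compl hA]
  have hm : IsInvariantMeasure P (ν.restrict A + μ.restrict Aᶜ) :=
    hμ.restrict_add_restrict_compl hν hA
      (hfμ ▸ restrict_withDensity_setOf_one_lt hf ▸ Measure.le_add_right le_rfl)
      (hfμ ▸ restrict_withDensity_compl_setOf_one_lt_le hf)
  have hα : IsInvariantMeasure P α := hm.of_add (hμ_eq ▸ hμ)
  have hα_compl : α Aᶜ = 0 :=
    withDensity_absolutelyContinuous _ _ (by simp [Measure.restrict_apply hA.compl])
  have h := hα.ae_eq_zero_of_measure_eq_zero hA.compl hα_compl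
  rw [ae_withDensity_iff (by fun_prop), ae_restrict_iff' hA] at h
  filter_upwards [h] with x hx hxA using hx hxA (tsub_pos_of_lt hxA).ne'

end Density

/-- If `μ ≠ ν` are mutually equivalent invariant probability measures of a Markov
kernel `P`, `f = dμ/dν` and `A = {f > 1}`, then `μ(A), ν(A) ∈ (0,1)`,
`P(y,Aᶜ) = 0` for ν-a.a. `y ∈ A`, `P(y,A) = 0` for ν-a.a. `y ∈ Aᶜ`, and the
normalized restrictions of `μ` to `A` and to `Aᶜ` are mutually singular
invariant probability measures of `P`. -/
theorem equivalent_invariant_measures_yield_singular_pair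
    {E : Type*} [MeasurableSpace E] (P : Kernel E E) [IsMarkovKernel P]
    (μ ν : Measure E) [IsProbabilityMeasure μ] [IsProbabilityMeasure ν]
    (hμ : IsInvariantMeasure P μ) (hν : IsInvariantMeasure P ν)
    (hne : μ ≠ ν) (hμν : μ ≪ ν) (hνμ : ν ≪ μ)
    (f : E → ENNReal) (hf : Measurable f) (hrn : ν.withDensity f = μ)
    (A : Set E) (hA : A = {x : E | 1 < f x}) :
    (0 < μ A ∧ μ A < 1) ∧ (0 < ν A ∧ ν A < 1) ∧
    (∀ᵐ y ∂ν, y ∈ A → P y Aᶜ = 0) ∧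
    (∀ᵐ y ∂ν, y ∈ Aᶜ → P y A = 0) ∧
    IsProbabilityMeasure ((μ A)⁻¹ • μ.restrict A) ∧
    IsProbabilityMeasure ((μ Aᶜ)⁻¹ • μ.restrict Aᶜ) ∧
    IsInvariantMeasure P ((μ A)⁻¹ • μ.restrict A) ∧
    IsInvariantMeasure P ((μ Aᶜ)⁻¹ • μ.restrict Aᶜ) ∧
    MutuallySingularMeasures ((μ A)⁻¹ • μ.restrict A) ((μ Aᶜ)⁻¹ • μ.restrict Aᶜ) := by
  subst hA
  have hAm : MeasurableSet {x | 1 < f x} := measurableSet_lt measurable_const hf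
  have hνA := measure_setOf_one_lt_pos hrn hne
  have hνAc := measure_compl_setOf_one_lt_pos hrn hne
  have hμA : 0 < μ {x | 1 < f x} := pos_iff_ne_zero.mpr fun h => hνA.ne' (hνμ h)
  have hμAc : 0 < μ {x | 1 < f x}ᶜ := pos_iff_ne_zero.mpr fun h => hνAc.ne' (hνμ h)
  have prob_lt_one {ρ : Measure E} [IsProbabilityMeasure ρ] (h : 0 < ρ {x | 1 < f x}ᶜ) :
      ρ {x | 1 < f x} < 1 :=
    prob_le_one.lt_of_ne ((prob_compl_eq_zero_iff hAm).not.mp h.ne')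
  have hA_closed := hν.ae_kernel_compl_setOf_one_lt_eq_zero hf hrn hμ
  have hAc_closed := hν.ae_compl_eq_zero_of_ae_mem hAm hA_closed
  refine ⟨⟨hμA, prob_lt_one hμAc⟩, ⟨hνA, prob_lt_one hνAc⟩, hA_closed, hAc_closed,
    cond_isProbabilityMeasure hμA.ne', cond_isProbabilityMeasure hμAc.ne',
    (hμ.restrict hAm (hμν.ae_le hA_closed)).smul _,
    (hμ.restrict hAm.compl (by rw [compl_compl]; exact hμν.ae_le hAc_closed)).smul _,
    {x | 1 < f x}, hAm, cond_apply_self hμA.ne' (measure_ne_top _ _), ?_⟩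
  simp [Measure.restrict_apply hAm]
end

section
/- Let (E, d) be a metric space and let μ and ν be mutually singular probability measures on the Borel σ-field of E; let C be a Borel set with μ(C) = 1 and ν(C) = 0. Then for every ε > 0 there exist closed sets A ⊆ C and B ⊆ Cᶜ such that μ(A) > 1 − ε, ν(B) > 1 − ε, and d(A, B) > 0. -/
/-! By inner regularity there are closed sets `K ⊆ C` and `B ⊆ Cᶜ` of measure
`> 1 - ε` for `μ` and `ν` respectively. Since `μ B = 0` and `B` is closed, the
`μ`-measure of the `δ`-thickening of `B` tends to `0` with `δ`, so removing a thin
open neighbourhood of `B` from `K` keeps `μ(K) > 1 - ε` and leaves a closed set at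
distance at least `δ` from `B`. -/

open MeasureTheory

/-- The distance between two subsets of a metric space, with value `+∞` when
one of the sets is empty: `d(A,B) = inf { d(a,b) : a ∈ A, b ∈ B }`. -/
noncomputable def setDist {E : Type*} [MetricSpace E] (A B : Set E) : ENNReal :=
  ⨅ (a : A) (b : B), ENNReal.ofReal (dist (a : E) (b : E))

open Metric Filter Topology

section SetDist

variable {E : Type*} [MetricSpace E]

theorem ofReal_le_setDist_sdiff_thickening (δ : ℝ) (A B : Set E) :
    ENNReal.ofReal δ ≤ setDist (A \ thickening δ B) B := by
  refine le_iInf fun a => le_iInf fun b => ?_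
  calc ENNReal.ofReal δ ≤ infEDist (a : E) B :=
        not_lt.mp fun h => a.2.2 (mem_thickening_iff_infEDist_lt.mpr h)
    _ ≤ edist (a : E) b := infEDist_le_edist_of_mem b.2
    _ = ENNReal.ofReal (dist (a : E) b) := edist_dist _ _

theorem setDist_sdiff_thickening_pos {δ : ℝ} (hδ : 0 < δ) (A B : Set E) :
    0 < setDist (A \ thickening δ B) B :=
  (ENNReal.ofReal_pos.mpr hδ).trans_le (ofReal_le_setDist_sdiff_thickening δ A B)

end SetDist

theorem exists_lt_measure_sdiff_thickening {E : Type*} [PseudoMetricSpace E] [MeasurableSpace E]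
    [OpensMeasurableSpace E] (μ : Measure E) [IsFiniteMeasure μ] {A B : Set E}
    (hB : IsClosed B) (hμB : μ B = 0) {t : ENNReal} (ht : t < μ A) :
    ∃ δ > 0, t < μ (A \ thickening δ B) := by
  have hlim : Tendsto (fun δ => μ (thickening δ B)) (𝓝[>] 0) (𝓝 0) :=
    hμB ▸ tendsto_measure_thickening_of_isClosed ⟨1, one_pos, measure_ne_top μ _⟩ hB
  have hsmall : ∀ᶠ δ in 𝓝[>] (0 : ℝ), μ (thickening δ B) < μ A - t :=
    hlim.eventually (gt_mem_nhds (tsub_pos_of_lt ht))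
  obtain ⟨δ, hδB, hδ⟩ := (hsmall.and self_mem_nhdsWithin).exists
  exact ⟨δ, hδ, (lt_tsub_comm.mp hδB).trans_le le_measure_sdiff⟩

/-- If `μ ⊥ ν` are Borel probability measures on a metric space, witnessed by a
Borel set `C` with `μ(C) = 1`, `ν(C) = 0`, then for every `ε > 0` there are
closed sets `A ⊆ C` and `B ⊆ Cᶜ` with `μ(A) > 1 - ε`, `ν(B) > 1 - ε` and
`d(A,B) > 0`. -/
theorem exists_separated_closed_sets_of_mutually_singular
    {E : Type*} [MetricSpace E] [MeasurableSpace E] [BorelSpace E]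
    (μ ν : Measure E) [IsProbabilityMeasure μ] [IsProbabilityMeasure ν]
    (C : Set E) (hC : MeasurableSet C) (hμC : μ C = 1) (hνC : ν C = 0)
    (ε : ℝ) (hε : 0 < ε) :
    ∃ A B : Set E, IsClosed A ∧ IsClosed B ∧ A ⊆ C ∧ B ⊆ Cᶜ ∧
      μ A > ENNReal.ofReal (1 - ε) ∧ ν B > ENNReal.ofReal (1 - ε) ∧
      0 < setDist A B := by
  have hlt : ENNReal.ofReal (1 - ε) < 1 := ENNReal.ofReal_lt_one.mpr (by linarith)
  have hνCc : ν Cᶜ = 1 := (prob_compl_eq_one_iff hC).mpr hνC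
  obtain ⟨K, hKC, hK, hμK⟩ := hC.exists_lt_isClosed_of_ne_top (by simp [hμC]) (hμC ▸ hlt)
  obtain ⟨B, hBC, hB, hνB⟩ :=
    hC.compl.exists_lt_isClosed_of_ne_top (by simp [hνCc]) (hνCc ▸ hlt)
  have hμB : μ B = 0 := measure_mono_null hBC ((prob_compl_eq_zero_iff hC).mpr hμC)
  obtain ⟨δ, hδ, hμKδ⟩ := exists_lt_measure_sdiff_thickening μ hB hμB hμK
  exact ⟨K \ thickening δ B, B, hK.sdiff isOpen_thickening, hB, Set.sdiff_subset.trans hKC,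
    hBC, hμKδ, hνB, setDist_sdiff_thickening_pos hδ K B⟩
end

section
/- Let P be a Markov kernel on a measurable space (E, 𝓔), let f : E → ℝ be bounded and measurable, and let γ ∈ ℝ. Define ψ_γ(x) = ℙ_x( liminf_{n→∞} (1/n) ∑_{i=0}^{n−1} f(X_i) ≥ γ ). Then ψ_γ is harmonic for P, i.e. ψ_γ(x) = ∫ ψ_γ(y) P(x, dy) for every x ∈ E; consequently, if μ is an invariant probability measure of P and (X_n) is the stationary chain with initial law μ, then (ψ_γ(X_n))_{n ∈ ℕ₀} is a bounded martingale with respect to the filtration generated by (X_n). -/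
open MeasureTheory ProbabilityTheory Filter

/-- Prepend a point to a trajectory. -/
def consTraj {E : Type*} (x : E) (ω : ℕ → E) : ℕ → E :=
  fun n => Nat.casesOn n x ω

/-- `ℙP : E → Measure (ℕ → E)` is the family of laws of the Markov chain with
kernel `P`. -/
def IsChainLaw {E : Type*} [MeasurableSpace E] (P : Kernel E E)
    (ℙP : E → Measure (ℕ → E)) : Prop :=
  (∀ x, IsProbabilityMeasure (ℙP x)) ∧
    ∀ x, ℙP x = (P x).bind (fun y => (ℙP y).map (consTraj x))

/-- The filtration on path space generated by the coordinate process. -/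
def coordFiltration (E : Type*) [m : MeasurableSpace E] :
    Filtration ℕ (MeasurableSpace.pi : MeasurableSpace (ℕ → E)) where
  seq n := ⨆ i ∈ Set.Iic n, MeasurableSpace.comap (fun ω : ℕ → E => ω i) m
  mono' a b hab := biSup_mono (Set.Iic_subset_Iic.mpr hab)
  le' n := by
    refine iSup_le fun i => iSup_le fun _ => ?_
    exact measurable_iff_comap_le.mp (measurable_pi_apply i)

/-!
Prepending a state to a path changes its `n`-th running average of the bounded `f` by
`O(1/n)`, so the event `{γ ≤ liminf (1/n) ∑_{i<n} f(X_i)}` is invariant under `consTraj x`.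
Harmonicity of `ψ_γ` is then the one-step recursion `ℙ_x = ∫ P(x,dy) (consTraj x)_* ℙ_y`.
The same recursion, applied to boxes `∏_{k<n} A_k`, makes `x ↦ ℙ_x` measurable by a π-λ
argument, and, applied `i` times, turns `∫_s φ(X_{i+1})` into `∫_s φ(X_i)` for every event `s`
determined by `X_0, …, X_i` and every harmonic `φ`: this is the martingale property.
-/

open Finset
open scoped ENNReal NNReal Topology

lemma abs_avg_le {a : ℕ → ℝ} {C : ℝ} (ha : ∀ i, |a i| ≤ C) (n : ℕ) :
    |(∑ i ∈ range n, a i) / n| ≤ C := by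
  rcases n.eq_zero_or_pos with rfl | hn
  · simpa using (abs_nonneg _).trans (ha 0)
  · rw [abs_div, Nat.abs_cast, div_le_iff₀ (by exact_mod_cast hn)]
    calc |∑ i ∈ range n, a i| ≤ ∑ i ∈ range n, |a i| := abs_sum_le_sum_abs _ _
      _ ≤ ∑ _i ∈ range n, C := sum_le_sum fun i _ => ha i
      _ = C * n := by simp [mul_comm]

lemma Filter.liminf_add_eq_of_tendsto_zero {ι : Type*} {l : Filter ι} [l.NeBot] {u v : ι → ℝ}
    {C : ℝ} (hu : ∀ i, |u i| ≤ C) (hv : Tendsto v l (𝓝 0)) :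
    liminf (u + v) l = liminf u l := by
  have hu_ge : IsBoundedUnder (· ≥ ·) l u := isBoundedUnder_of ⟨-C, fun i => (abs_le.1 (hu i)).1⟩
  have hu_le : IsBoundedUnder (· ≤ ·) l u := isBoundedUnder_of ⟨C, fun i => (abs_le.1 (hu i)).2⟩
  have hv_ge := hv.isBoundedUnder_ge
  have hv_le := hv.isBoundedUnder_le
  refine le_antisymm ?_ ?_
  · have h := liminf_add_le hv_ge hv_le hu_ge hu_le.isCoboundedUnder_ge
    rwa [add_comm, hv.limsup_eq, zero_add] at h
  · have h := le_liminf_add hu_ge hu_le hv_ge hv_le.isCoboundedUnder_ge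
    rwa [hv.liminf_eq, add_zero] at h

lemma liminf_avg_eq_of_tail_eq {a b : ℕ → ℝ} {C : ℝ} (ha : ∀ i, |a i| ≤ C)
    (hab : ∀ i, b (i + 1) = a i) :
    liminf (fun n : ℕ => (∑ i ∈ range n, b i) / n) atTop
      = liminf (fun n : ℕ => (∑ i ∈ range n, a i) / n) atTop := by
  set avg : ℕ → ℝ := fun n => (∑ i ∈ range n, a i) / n
  have hsplit : (fun n : ℕ => (∑ i ∈ range (n + 1), b i) / ↑(n + 1))
      = avg + fun n : ℕ => (1 / ((n : ℝ) + 1)) * (b 0 - avg n) := by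
    funext n
    simp only [Pi.add_apply, avg, sum_range_succ', hab]
    rcases n.eq_zero_or_pos with rfl | hn
    · simp
    · have : (n : ℝ) ≠ 0 := by exact_mod_cast hn.ne'
      push_cast
      field_simp
      ring
  have herr : Tendsto (fun n : ℕ => (1 / ((n : ℝ) + 1)) * (b 0 - avg n)) atTop (𝓝 0) :=
    tendsto_one_div_add_atTop_nhds_zero_nat.zero_mul_isBoundedUnder_le <|
      isBoundedUnder_of ⟨|b 0| + C, fun n => (abs_sub _ _).trans (by gcongr; exact abs_avg_le ha n)⟩
  rw [← liminf_nat_add _ 1, hsplit, liminf_add_eq_of_tendsto_zero (abs_avg_le ha) herr]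

section MarkovChain

variable {E : Type*}

/-- `ψ_γ x` is the `ℙ_x`-probability of this event. -/
def liminfAvgGe (f : E → ℝ) (γ : ℝ) : Set (ℕ → E) :=
  {ω | γ ≤ liminf (fun n : ℕ => (∑ i ∈ range n, f (ω i)) / n) atTop}

lemma preimage_consTraj_liminfAvgGe {f : E → ℝ} {C : ℝ} (hf : ∀ x, |f x| ≤ C) (γ : ℝ) (x : E) :
    consTraj x ⁻¹' liminfAvgGe f γ = liminfAvgGe f γ := by
  ext ω
  exact iff_of_eq <| congrArg (γ ≤ ·) <|
    liminf_avg_eq_of_tail_eq (b := fun i => f (consTraj x ω i)) (fun i => hf (ω i)) fun _ => rfl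

lemma consTraj_mem_pi_Iio_succ {x : E} {ω : ℕ → E} {n : ℕ} {A : ℕ → Set E} :
    consTraj x ω ∈ (Set.Iio (n + 1)).pi A ↔ x ∈ A 0 ∧ ω ∈ (Set.Iio n).pi fun k => A (k + 1) := by
  simp only [Set.mem_pi, Set.mem_Iio, Nat.forall_lt_succ_left]
  rfl

variable [MeasurableSpace E]

lemma measurableSet_liminfAvgGe {f : E → ℝ} (hf : Measurable f) (γ : ℝ) :
    MeasurableSet (liminfAvgGe f γ) :=
  measurableSet_le measurable_const <| Measurable.liminf fun _ =>
    (Finset.measurable_sum _ fun i _ => hf.comp (measurable_pi_apply i)).div_const _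

lemma measurable_consTraj (x : E) : Measurable (consTraj x) := by
  refine measurable_pi_lambda _ fun n => ?_
  cases n with
  | zero => exact measurable_const
  | succ n => exact measurable_pi_apply n

lemma coordFiltration_le_piLE (i : ℕ) :
    coordFiltration E i ≤ Filtration.piLE (X := fun _ : ℕ => E) i :=
  iSup₂_le fun k hk =>
    ((measurable_pi_apply ⟨k, hk⟩).comp (comap_measurable (Preorder.restrictLe i))).comap_le

lemma measurable_eval_coordFiltration (n : ℕ) :
    Measurable[coordFiltration E n] fun ω : ℕ → E => ω n :=
  Measurable.of_comap_le (le_iSup₂_of_le n (Set.mem_Iic.2 le_rfl) le_rfl)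

namespace IsChainLaw

variable {P : Kernel E E} {ℙP : E → Measure (ℕ → E)} (hℙ : IsChainLaw P ℙP)
include hℙ

lemma aemeasurable_map_consTraj (x : E) :
    AEMeasurable (fun y => (ℙP y).map (consTraj x)) (P x) := by
  -- otherwise `Measure.bind` returns its junk value `0`, which is not a probability measure
  by_contra h
  have h1 := (hℙ.1 x).measure_univ
  rw [hℙ.2 x, Measure.bind, Measure.map_of_not_aemeasurable h, Measure.join_zero] at h1
  simp at h1

lemma apply_eq_lintegral (x : E) {B : Set (ℕ → E)} (hB : MeasurableSet B) :
    ℙP x B = ∫⁻ y, ℙP y (consTraj x ⁻¹' B) ∂P x := by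
  rw [hℙ.2 x, Measure.bind_apply hB (hℙ.aemeasurable_map_consTraj x)]
  simp_rw [Measure.map_apply (measurable_consTraj x) hB]

lemma lintegral_eq (x : E) {F : (ℕ → E) → ℝ≥0∞} (hF : Measurable F) :
    ∫⁻ ω, F ω ∂ℙP x = ∫⁻ y, ∫⁻ ω, F (consTraj x ω) ∂ℙP y ∂P x := by
  rw [hℙ.2 x, Measure.lintegral_bind (hℙ.aemeasurable_map_consTraj x) hF.aemeasurable]
  simp_rw [lintegral_map hF (measurable_consTraj x)]

lemma measurable_apply_pi_Iio (n : ℕ) {A : ℕ → Set E} (hA : ∀ k, MeasurableSet (A k)) :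
    Measurable fun x => ℙP x ((Set.Iio n).pi A) := by
  have := hℙ.1
  induction n generalizing A with
  | zero => simp
  | succ n ih =>
    have hcons : ∀ x, ℙP x ((Set.Iio (n + 1)).pi A)
        = (A 0).indicator (fun x => ∫⁻ y, ℙP y ((Set.Iio n).pi fun k => A (k + 1)) ∂P x) x := by
      intro x
      rw [hℙ.apply_eq_lintegral x (MeasurableSet.pi (Set.to_countable _) fun k _ => hA k)]
      by_cases hx : x ∈ A 0
      · simp only [Set.indicator_of_mem hx]
        congr! 3 with y
        ext ω
        exact consTraj_mem_pi_Iio_succ.trans (and_iff_right hx)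
      · have hempty : consTraj x ⁻¹' (Set.Iio (n + 1)).pi A = ∅ :=
          Set.eq_empty_of_forall_notMem fun ω hω => hx (consTraj_mem_pi_Iio_succ.1 hω).1
        simp [Set.indicator_of_notMem hx, hempty]
    simp_rw [hcons]
    exact (ih fun k => hA (k + 1)).lintegral_kernel.indicator (hA 0)

lemma measurable : Measurable ℙP := by
  have := hℙ.1
  refine .measure_of_isPiSystem_of_isProbabilityMeasure
    (generateFrom_squareCylinders (α := fun _ : ℕ => E)).symm
    (isPiSystem_squareCylinders (fun _ => MeasurableSpace.isPiSystem_measurableSet) fun _ => .univ) ?_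
  rintro _ ⟨s, t, ht, rfl⟩
  obtain ⟨n, hsn⟩ := s.exists_nat_subset_range
  have hpi : (s : Set ℕ).pi t = (Set.Iio n).pi fun k => if k ∈ s then t k else Set.univ := by
    ext ω
    simp only [Set.mem_pi, Finset.mem_coe, Set.mem_Iio]
    refine ⟨fun h k _ => ?_, fun h k hk => by simpa [hk] using h k (mem_range.1 (hsn hk))⟩
    split_ifs with hk
    · exact h k hk
    · trivial
  rw [hpi]
  refine hℙ.measurable_apply_pi_Iio n fun k => ?_
  split_ifs
  · exact ht k (Set.mem_univ k)
  · exact .univ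

lemma apply_eq_lintegral_of_preimage_consTraj {B : Set (ℕ → E)} (hB : MeasurableSet B)
    (hinv : ∀ x, consTraj x ⁻¹' B = B) (x : E) : ℙP x B = ∫⁻ y, ℙP y B ∂P x := by
  rw [hℙ.apply_eq_lintegral x hB, hinv x]

variable [IsMarkovKernel P]

lemma lintegral_of_dependsOn_zero (x : E) {F : (ℕ → E) → ℝ≥0∞} (hF : Measurable F)
    (hF0 : DependsOn F (Set.Iic 0)) : ∫⁻ ω, F ω ∂ℙP x = F fun _ => x := by
  have := hℙ.1
  have hconst : ∀ ω, F (consTraj x ω) = F fun _ => x := fun ω =>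
    hF0 fun k hk => by rw [Nat.le_zero.1 hk]; rfl
  simp [hℙ.lintegral_eq x hF, hconst]

/-- The Markov property at time `i`, tested against a harmonic function. -/
lemma lintegral_mul_comp_eval_succ {φ : E → ℝ≥0∞} (hφ : Measurable φ)
    (hharm : ∀ x, φ x = ∫⁻ y, φ y ∂P x) (i : ℕ) {g : (ℕ → E) → ℝ≥0∞} (hg : Measurable g)
    (hgi : DependsOn g (Set.Iic i)) (x : E) :
    ∫⁻ ω, g ω * φ (ω (i + 1)) ∂ℙP x = ∫⁻ ω, g ω * φ (ω i) ∂ℙP x := by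
  have hφ_eval (k : ℕ) : Measurable fun ω : ℕ → E => φ (ω k) := hφ.comp (measurable_pi_apply k)
  induction i generalizing g x with
  | zero =>
    have hmul (k : ℕ) : Measurable fun ω => g ω * φ (ω k) := hg.mul (hφ_eval k)
    have hgx : ∀ ω, g (consTraj x ω) = g fun _ => x := fun ω =>
      hgi fun k hk => by rw [Nat.le_zero.1 hk]; rfl
    have hφ0 (y : E) : ∫⁻ ω, φ (ω 0) ∂ℙP y = φ y :=
      hℙ.lintegral_of_dependsOn_zero y (hφ_eval 0) fun ω ω' h => by rw [h 0 (Set.mem_Iic.2 le_rfl)]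
    have hgφ0 : DependsOn (fun ω => g ω * φ (ω 0)) (Set.Iic 0) := fun ω ω' h => by
      show g ω * φ (ω 0) = g ω' * φ (ω' 0)
      rw [hgi h, h 0 (Set.mem_Iic.2 le_rfl)]
    have hinner (y : E) :
        ∫⁻ ω, g (consTraj x ω) * φ (ω 0) ∂ℙP y = (g fun _ => x) * φ y := by
      simp only [hgx]
      rw [lintegral_const_mul _ (hφ_eval 0), hφ0]
    calc ∫⁻ ω, g ω * φ (ω (0 + 1)) ∂ℙP x
        = ∫⁻ y, ∫⁻ ω, g (consTraj x ω) * φ (ω 0) ∂ℙP y ∂P x := hℙ.lintegral_eq x (hmul 1)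
      _ = ∫⁻ y, (g fun _ => x) * φ y ∂P x := lintegral_congr hinner
      _ = (g fun _ => x) * φ x := by rw [lintegral_const_mul _ hφ, ← hharm]
      _ = ∫⁻ ω, g ω * φ (ω 0) ∂ℙP x := (hℙ.lintegral_of_dependsOn_zero x (hmul 0) hgφ0).symm
  | succ i ih =>
    have hgx : DependsOn (fun ω => g (consTraj x ω)) (Set.Iic i) := fun ω ω' h =>
      hgi fun k hk => by
        cases k with
        | zero => rfl
        | succ k => exact h k (Nat.succ_le_succ_iff.1 hk)
    have hmul (k : ℕ) : Measurable fun ω => g ω * φ (ω k) := hg.mul (hφ_eval k)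
    rw [hℙ.lintegral_eq x (hmul _), hℙ.lintegral_eq x (hmul _)]
    exact lintegral_congr fun y => ih (hg.comp (measurable_consTraj x)) hgx y

lemma setLIntegral_bind_comp_eval_succ (μ : Measure E) {φ : E → ℝ≥0∞} (hφ : Measurable φ)
    (hharm : ∀ x, φ x = ∫⁻ y, φ y ∂P x) {i : ℕ} {s : Set (ℕ → E)}
    (hs : MeasurableSet[coordFiltration E i] s) :
    ∫⁻ ω in s, φ (ω (i + 1)) ∂μ.bind ℙP = ∫⁻ ω in s, φ (ω i) ∂μ.bind ℙP := by
  have hsm : MeasurableSet s := (coordFiltration E).le i s hs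
  have hmeas : Measurable[Filtration.piLE i] (s.indicator (1 : (ℕ → E) → ℝ≥0∞)) :=
    measurable_const.indicator (coordFiltration_le_piLE i s hs)
  have hmul (k : ℕ) : Measurable fun ω : ℕ → E => s.indicator 1 ω * φ (ω k) :=
    (measurable_one.indicator hsm).mul (hφ.comp (measurable_pi_apply k))
  have hset (k : ℕ) :
      ∫⁻ ω in s, φ (ω k) ∂μ.bind ℙP = ∫⁻ ω, s.indicator 1 ω * φ (ω k) ∂μ.bind ℙP := by
    rw [← lintegral_indicator hsm]
    congr with ω
    by_cases hω : ω ∈ s <;> simp [hω]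
  rw [hset, hset, Measure.lintegral_bind hℙ.measurable.aemeasurable (hmul _).aemeasurable,
    Measure.lintegral_bind hℙ.measurable.aemeasurable (hmul _).aemeasurable]
  exact lintegral_congr fun x => hℙ.lintegral_mul_comp_eval_succ hφ hharm i
    (measurable_one.indicator hsm) hmeas.dependsOn_of_piLE x

end IsChainLaw

theorem IsChainLaw.martingale_comp_eval {P : Kernel E E} [IsMarkovKernel P]
    {ℙP : E → Measure (ℕ → E)} (hℙ : IsChainLaw P ℙP) (μ : Measure E) [IsProbabilityMeasure μ]
    {φ : E → ℝ≥0∞} (hφ : Measurable φ) {C : ℝ≥0} (hφC : ∀ x, φ x ≤ C)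
    (hharm : ∀ x, φ x = ∫⁻ y, φ y ∂P x) :
    Martingale (fun (n : ℕ) (ω : ℕ → E) => (φ (ω n)).toReal) (coordFiltration E) (μ.bind ℙP) := by
  have : IsProbabilityMeasure (μ.bind ℙP) :=
    isProbabilityMeasure_bind hℙ.measurable.aemeasurable (ae_of_all _ hℙ.1)
  have hφ_eval (n : ℕ) : Measurable fun ω : ℕ → E => φ (ω n) := hφ.comp (measurable_pi_apply n)
  have hφ_lt_top (n : ℕ) {ν : Measure (ℕ → E)} : ∀ᵐ ω ∂ν, φ (ω n) < ∞ :=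
    ae_of_all _ fun ω => (hφC _).trans_lt ENNReal.coe_lt_top
  refine martingale_of_setIntegral_eq_succ
    (fun n => ((hφ.ennreal_toReal).comp (measurable_eval_coordFiltration n)).stronglyMeasurable)
    (fun n => .of_bound (hφ_eval n).ennreal_toReal.aestronglyMeasurable C <| ae_of_all _ fun ω => ?_)
    fun i s hs => ?_
  · rw [Real.norm_eq_abs, abs_of_nonneg ENNReal.toReal_nonneg]
    exact ENNReal.toReal_le_coe_of_le_coe (hφC _)
  · rw [integral_toReal (hφ_eval i).aemeasurable (hφ_lt_top i),
      integral_toReal (hφ_eval (i + 1)).aemeasurable (hφ_lt_top (i + 1)),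
      hℙ.setLIntegral_bind_comp_eval_succ μ hφ hharm hs]

end MarkovChain

theorem psi_gamma_harmonic_and_martingale_general
    {E : Type*} [MeasurableSpace E] (P : Kernel E E) [IsMarkovKernel P]
    (ℙP : E → Measure (ℕ → E)) (hℙ : IsChainLaw P ℙP)
    (f : E → ℝ) (hf : Measurable f) (hbdd : ∃ Cf : ℝ, ∀ x, |f x| ≤ Cf)
    (γ : ℝ)
    (ψ : E → ENNReal)
    (hψ : ∀ x, ψ x = ℙP x {ω : ℕ → E |
      γ ≤ liminf (fun n : ℕ => (∑ i ∈ Finset.range n, f (ω i)) / n) atTop})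
    (μ : Measure E) [IsProbabilityMeasure μ] :
    (∀ x, ψ x = ∫⁻ y, ψ y ∂(P x)) ∧
    Martingale (fun (n : ℕ) (ω : ℕ → E) => (ψ (ω n)).toReal)
      (coordFiltration E) (μ.bind ℙP) ∧
    (∃ C : ℝ, ∀ (n : ℕ) (ω : ℕ → E), |(ψ (ω n)).toReal| ≤ C) := by
  obtain ⟨Cf, hCf⟩ := hbdd
  have hA := measurableSet_liminfAvgGe hf γ
  obtain rfl : ψ = fun x => ℙP x (liminfAvgGe f γ) := funext hψ
  have := hℙ.1
  have hharm := hℙ.apply_eq_lintegral_of_preimage_consTraj hA (preimage_consTraj_liminfAvgGe hCf γ)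
  have hle_one (x : E) : ℙP x (liminfAvgGe f γ) ≤ (1 : ℝ≥0) := by
    simpa using prob_le_one
  refine ⟨hharm, hℙ.martingale_comp_eval μ (Measure.measurable_coe hA |>.comp hℙ.measurable)
    hle_one hharm, 1, fun n ω => ?_⟩
  rw [abs_of_nonneg ENNReal.toReal_nonneg]
  exact ENNReal.toReal_le_coe_of_le_coe (hle_one _)

/-- `ψ_γ(x) = ℙ_x(liminf (1/n) ∑_{i<n} f(X_i) ≥ γ)` is harmonic for `P`, i.e.
`ψ_γ(x) = ∫ ψ_γ(y) P(x,dy)` for all `x`; consequently, if `μ` is an invariant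
probability measure of `P`, then `(ψ_γ(X_n))_n` is a bounded martingale under
the law of the stationary chain with initial law `μ`, with respect to the
filtration generated by the coordinates. -/
theorem psi_gamma_harmonic_and_martingale
    {E : Type*} [MeasurableSpace E] (P : Kernel E E) [IsMarkovKernel P]
    (ℙP : E → Measure (ℕ → E)) (hℙ : IsChainLaw P ℙP)
    (f : E → ℝ) (hf : Measurable f) (hbdd : ∃ Cf : ℝ, ∀ x, |f x| ≤ Cf)
    (γ : ℝ)
    (ψ : E → ENNReal)
    (hψ : ∀ x, ψ x = ℙP x {ω : ℕ → E |
      γ ≤ liminf (fun n : ℕ => (∑ i ∈ Finset.range n, f (ω i)) / n) atTop})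
    (μ : Measure E) [IsProbabilityMeasure μ] (hμ : IsInvariantMeasure P μ) :
    (∀ x, ψ x = ∫⁻ y, ψ y ∂(P x)) ∧
    Martingale (fun (n : ℕ) (ω : ℕ → E) => (ψ (ω n)).toReal)
      (coordFiltration E) (μ.bind ℙP) ∧
    (∃ C : ℝ, ∀ (n : ℕ) (ω : ℕ → E), |(ψ (ω n)).toReal| ≤ C) :=
  psi_gamma_harmonic_and_martingale_general P ℙP hℙ f hf hbdd γ ψ hψ μ
end

section
/- Let (Ω, ℱ, ℙ) be a probability space, let M ∈ ℱ with ℙ(M) > 0, and let α : M → (0, ∞) be an arbitrary (not necessarily measurable) function. Then there exist δ > 0 and δ̄ > 0 such that for every measurable set M̄ ⊆ M with ℙ(M̄) ≥ ℙ(M) − δ there exists a point ω ∈ M̄ with α(ω) > δ̄. -/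
/-!
Since `α > 0` on `M`, the sets `{ω ∈ M | 1/(n+1) < α ω}` cover `M`, so by countable
subadditivity (valid for the outer measure, with no measurability of `α`) one of them, `A`,
has positive measure. Take `δ̄ = 1/(n+1)` and `0 < δ < ℙ A`: a measurable `M̄ ⊆ M` missing `A`
would leave `ℙ(M \ M̄) ≥ ℙ A > δ`.
-/

open MeasureTheory
open scoped ENNReal

theorem exists_pos_measure_setOf_lt {Ω : Type*} [MeasurableSpace Ω] {μ : Measure Ω}
    {s : Set Ω} {f : Ω → ℝ} (hs : μ s ≠ 0) (hf : ∀ x ∈ s, 0 < f x) :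
    ∃ ε > 0, μ {x ∈ s | ε < f x} ≠ 0 := by
  by_contra! h
  have hcover : s ⊆ ⋃ n : ℕ, {x ∈ s | 1 / (n + 1 : ℝ) < f x} := fun x hx =>
    let ⟨n, hn⟩ := exists_nat_one_div_lt (hf x hx)
    Set.mem_iUnion.2 ⟨n, hx, hn⟩
  exact hs (measure_mono_null hcover (measure_iUnion_null fun n => h _ Nat.one_div_pos_of_nat))

theorem inter_nonempty_of_measure_sub_le {Ω : Type*} [MeasurableSpace Ω] {μ : Measure Ω}
    {s t u : Set Ω} {ε : ℝ≥0∞} (ht : MeasurableSet t) (hts : t ⊆ s) (ht_fin : μ t ≠ ∞)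
    (hus : u ⊆ s) (hεu : ε < μ u) (hst : μ s - ε ≤ μ t) : (t ∩ u).Nonempty := by
  by_contra h
  have hu : u ⊆ s \ t := fun x hx => ⟨hus hx, fun hxt => h ⟨x, hxt, hx⟩⟩
  have : μ u ≤ ε :=
    calc μ u ≤ μ (s \ t) := measure_mono hu
      _ = μ s - μ t := measure_sdiff hts ht.nullMeasurableSet ht_fin
      _ ≤ ε := tsub_le_iff_tsub_le.1 hst
  exact this.not_gt hεu

theorem exists_delta_deltabar_of_pos_on_measurable_general
    {Ω : Type*} [MeasurableSpace Ω] (ℙ : Measure Ω) [IsProbabilityMeasure ℙ]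
    (M : Set Ω) (hMpos : 0 < ℙ M)
    (α : Ω → ℝ) (hα : ∀ ω ∈ M, 0 < α ω) :
    ∃ δ > (0 : ℝ), ∃ δbar > (0 : ℝ),
      ∀ Mbar : Set Ω, MeasurableSet Mbar → Mbar ⊆ M →
        ℙ M - ENNReal.ofReal δ ≤ ℙ Mbar → ∃ ω ∈ Mbar, δbar < α ω := by
  obtain ⟨δbar, hδbar, hA⟩ := exists_pos_measure_setOf_lt hMpos.ne' hα
  obtain ⟨δ, -, hδ, hδA⟩ := ENNReal.lt_iff_exists_real_btwn.1 (pos_iff_ne_zero.2 hA)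
  refine ⟨δ, ENNReal.ofReal_pos.1 hδ, δbar, hδbar, fun Mbar hMbar hsub hle => ?_⟩
  obtain ⟨ω, hωMbar, -, hω⟩ := inter_nonempty_of_measure_sub_le hMbar hsub
    (measure_ne_top ℙ Mbar) (fun _ hx => hx.1) hδA hle
  exact ⟨ω, hωMbar, hω⟩

/-- Let `(Ω, ℱ, ℙ)` be a probability space, `M` measurable with `ℙ(M) > 0`, and
`α` an arbitrary function that is positive on `M`. Then there exist `δ > 0` and
`δ̄ > 0` such that every measurable `M̄ ⊆ M` with `ℙ(M̄) ≥ ℙ(M) - δ` contains a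
point `ω` with `α(ω) > δ̄`. -/
theorem exists_delta_deltabar_of_pos_on_measurable
    {Ω : Type*} [MeasurableSpace Ω] (ℙ : Measure Ω) [IsProbabilityMeasure ℙ]
    (M : Set Ω) (hM : MeasurableSet M) (hMpos : 0 < ℙ M)
    (α : Ω → ℝ) (hα : ∀ ω ∈ M, 0 < α ω) :
    ∃ δ > (0 : ℝ), ∃ δbar > (0 : ℝ),
      ∀ Mbar : Set Ω, MeasurableSet Mbar → Mbar ⊆ M →
        ℙ M - ENNReal.ofReal δ ≤ ℙ Mbar → ∃ ω ∈ Mbar, δbar < α ω :=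
  exists_delta_deltabar_of_pos_on_measurable_general ℙ M hMpos α hα
end

section
/- Let I ⊆ [0,1] with λ*(I) = 1 and λ_*(I) = 0, let J := [0,1] \ I, and let E := E₁ ∪ E₂ be the disjoint union E₁ := {(x,1) : x ∈ I}, E₂ := {(x,2) : x ∈ J}, equipped with the metric d((x,i),(y,j)) = |x − y| if i = j and d((x,i),(y,j)) = 1 if i ≠ j. Define ρ : E × E → [0,1] by ρ((x,i),(y,j)) = |x − y|. Then: (E, d) is a separable metric space; ρ is continuous with respect to d; ρ is positive definite (ρ(p,q) = 0 iff p = q); and ρ is itself a metric on E under which (E, ρ) is a Polish space, isometric to the interval [0,1] with the Euclidean metric, whose topology differs from the topology generated by d. -/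
open MeasureTheory

/-- The disjoint union `E = E₁ ∪ E₂` of (copies of) the sets `I` and `J`. -/
def Ecounter (I J : Set ℝ) : Type := ↥I ⊕ ↥J

/-- The real number underlying a point of `Ecounter I J`. -/
def valE {I J : Set ℝ} : Ecounter I J → ℝ := Sum.elim Subtype.val Subtype.val

/-- The metric `d` on `E`: `|x - y|` for points on the same side, `1` for
points on different sides. -/
def dE {I J : Set ℝ} (p q : Ecounter I J) : ℝ :=
  match p, q with
  | Sum.inl x, Sum.inl y => |(x : ℝ) - (y : ℝ)|
  | Sum.inr x, Sum.inr y => |(x : ℝ) - (y : ℝ)|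
  | _, _ => 1

/-- The function `ρ((x,i),(y,j)) = |x - y|` on `E × E`. -/
def rhoE {I J : Set ℝ} (p q : Ecounter I J) : ℝ := |valE p - valE q|

open Topology Set

/-! Under `ρ`, the coordinate map `valE` identifies `E` isometrically with `[0,1]`, while under
`d` the copy `E₁` of `I` is open. If the two topologies agreed, `I` would be relatively open in
`[0,1]`, hence Lebesgue measurable, and its inner and outer measures would coincide. -/

namespace Ecounter

variable {I J : Set ℝ}

lemma valE_mem_Icc (hI : I ⊆ Icc 0 1) (hJ : J ⊆ Icc 0 1) :
    ∀ p : Ecounter I J, valE p ∈ Icc (0 : ℝ) 1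
  | Sum.inl a => hI a.2
  | Sum.inr b => hJ b.2

lemma valE_injective (hIJ : Disjoint I J) : Function.Injective (valE : Ecounter I J → ℝ) := by
  rintro (a | a) (b | b) h
  · exact congrArg Sum.inl (Subtype.ext h)
  · exact (hIJ.ne_of_mem a.2 b.2 h).elim
  · exact (hIJ.ne_of_mem b.2 a.2 h.symm).elim
  · exact congrArg Sum.inr (Subtype.ext h)

lemma rhoE_eq_zero_iff (hIJ : Disjoint I J) {p q : Ecounter I J} : rhoE p q = 0 ↔ p = q := by
  rw [rhoE, abs_eq_zero, sub_eq_zero]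
  exact (valE_injective hIJ).eq_iff

lemma rhoE_le_one (hI : I ⊆ Icc 0 1) (hJ : J ⊆ Icc 0 1) (p q : Ecounter I J) : rhoE p q ≤ 1 :=
  have hp := valE_mem_Icc hI hJ p
  have hq := valE_mem_Icc hI hJ q
  abs_sub_le_of_nonneg_of_le hp.1 hp.2 hq.1 hq.2

lemma rhoE_le_dE (hI : I ⊆ Icc 0 1) (hJ : J ⊆ Icc 0 1) :
    ∀ p q : Ecounter I J, rhoE p q ≤ dE p q
  | Sum.inl _, Sum.inl _ | Sum.inr _, Sum.inr _ => le_rfl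
  | Sum.inl _, Sum.inr _ | Sum.inr _, Sum.inl _ => rhoE_le_one hI hJ _ _

lemma dE_self : ∀ p : Ecounter I J, dE p p = 0
  | Sum.inl _ | Sum.inr _ => by simp [dE]

lemma dE_comm : ∀ p q : Ecounter I J, dE p q = dE q p
  | Sum.inl _, Sum.inl _ | Sum.inr _, Sum.inr _ => abs_sub_comm _ _
  | Sum.inl _, Sum.inr _ | Sum.inr _, Sum.inl _ => rfl

lemma dE_triangle (hI : I ⊆ Icc 0 1) (hJ : J ⊆ Icc 0 1) (p q r : Ecounter I J) :
    dE p r ≤ dE p q + dE q r := by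
  rcases p with a | a <;> rcases q with b | b <;> rcases r with c | c <;> simp only [dE]
  · exact abs_sub_le _ _ _
  · exact le_add_of_nonneg_left (abs_nonneg _)
  · exact (rhoE_le_one hI hJ (.inl a) (.inl c)).trans (le_add_of_nonneg_right zero_le_one)
  · exact le_add_of_nonneg_right (abs_nonneg _)
  · exact le_add_of_nonneg_right (abs_nonneg _)
  · exact (rhoE_le_one hI hJ (.inr a) (.inr c)).trans (le_add_of_nonneg_right zero_le_one)
  · exact le_add_of_nonneg_left (abs_nonneg _)
  · exact abs_sub_le _ _ _

lemma eq_of_dE_eq_zero : ∀ {p q : Ecounter I J}, dE p q = 0 → p = q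
  | Sum.inl _, Sum.inl _, h => congrArg Sum.inl (Subtype.ext (sub_eq_zero.1 (abs_eq_zero.1 h)))
  | Sum.inr _, Sum.inr _, h => congrArg Sum.inr (Subtype.ext (sub_eq_zero.1 (abs_eq_zero.1 h)))
  | Sum.inl _, Sum.inr _, h | Sum.inr _, Sum.inl _, h => (one_ne_zero h).elim

@[reducible] def metricSpaceDE (hI : I ⊆ Icc 0 1) (hJ : J ⊆ Icc 0 1) :
    MetricSpace (Ecounter I J) where
  dist := dE
  dist_self := dE_self
  dist_comm := dE_comm
  dist_triangle := dE_triangle hI hJ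
  eq_of_dist_eq_zero := eq_of_dE_eq_zero

@[reducible] def metricSpaceRhoE (hIJ : Disjoint I J) : MetricSpace (Ecounter I J) :=
  MetricSpace.induced valE (valE_injective hIJ) inferInstance

lemma separableSpace_dE (hI : I ⊆ Icc 0 1) (hJ : J ⊆ Icc 0 1) :
    let := metricSpaceDE hI hJ
    TopologicalSpace.SeparableSpace (Ecounter I J) := by
  let := metricSpaceDE hI hJ
  have hinl : Isometry (β := Ecounter I J) Sum.inl := Isometry.of_dist_eq fun _ _ => rfl
  have hinr : Isometry (β := Ecounter I J) Sum.inr := Isometry.of_dist_eq fun _ _ => rfl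
  rw [← TopologicalSpace.isSeparable_univ_iff]
  convert (TopologicalSpace.isSeparable_range hinl.continuous).union
    (TopologicalSpace.isSeparable_range hinr.continuous)
  exact range_inl_union_range_inr.symm

lemma lipschitzWith_valE_dE (hI : I ⊆ Icc 0 1) (hJ : J ⊆ Icc 0 1) :
    let := metricSpaceDE hI hJ
    LipschitzWith 1 (valE : Ecounter I J → ℝ) :=
  let := metricSpaceDE hI hJ
  LipschitzWith.of_dist_le_mul fun p q => by
    rw [NNReal.coe_one, one_mul]
    exact rhoE_le_dE hI hJ p q

lemma continuous_rhoE_dE (hI : I ⊆ Icc 0 1) (hJ : J ⊆ Icc 0 1) :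
    let := metricSpaceDE hI hJ
    Continuous (fun pq : Ecounter I J × Ecounter I J => rhoE pq.1 pq.2) :=
  let := metricSpaceDE hI hJ
  have hval := (lipschitzWith_valE_dE hI hJ).continuous
  (hval.comp continuous_fst).dist (hval.comp continuous_snd)

lemma isOpen_range_inl_dE (hI : I ⊆ Icc 0 1) (hJ : J ⊆ Icc 0 1) :
    IsOpen[(metricSpaceDE hI hJ).toUniformSpace.toTopologicalSpace]
      (range (Sum.inl : I → Ecounter I J)) := by
  let := metricSpaceDE hI hJ
  refine Metric.isOpen_iff.2 ?_
  rintro _ ⟨a, rfl⟩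
  refine ⟨1, one_pos, fun q hq => ?_⟩
  rcases q with b | b
  · exact mem_range_self b
  · exact ((Metric.mem_ball.1 hq).ne rfl).elim

lemma polishSpace_rhoE (hIJ : Disjoint I J) (hclosed : IsClosed (I ∪ J)) :
    let := metricSpaceRhoE hIJ
    PolishSpace (Ecounter I J) := by
  let := metricSpaceRhoE hIJ
  have hval : Isometry (valE : Ecounter I J → ℝ) := Isometry.of_dist_eq fun _ _ => rfl
  have hrange : range (valE : Ecounter I J → ℝ) = I ∪ J := by
    change range (Sum.elim (Subtype.val : I → ℝ) (Subtype.val : J → ℝ)) = I ∪ J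
    rw [Sum.elim_range, Subtype.range_coe, Subtype.range_coe]
  exact IsClosedEmbedding.polishSpace ⟨hval.isEmbedding, hrange ▸ hclosed⟩

lemma exists_isOpen_inter_eq_of_isOpen_range_inl_rhoE (hIJ : Disjoint I J)
    (h : IsOpen[(metricSpaceRhoE hIJ).toUniformSpace.toTopologicalSpace]
      (range (Sum.inl : I → Ecounter I J))) :
    ∃ U : Set ℝ, IsOpen U ∧ U ∩ (I ∪ J) = I := by
  obtain ⟨U, hU, hpre⟩ := isOpen_induced_iff.1 h
  refine ⟨U, hU, subset_antisymm ?_ fun x hx => ⟨?_, .inl hx⟩⟩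
  · rintro x ⟨hxU, hx | hx⟩
    · exact hx
    · obtain ⟨_, h⟩ : (Sum.inr ⟨x, hx⟩ : Ecounter I J) ∈ range Sum.inl := hpre ▸ hxU
      exact (Sum.inl_ne_inr h).elim
  · exact (hpre ▸ mem_range_self _ : (Sum.inl ⟨x, hx⟩ : Ecounter I J) ∈ valE ⁻¹' U)

open scoped Classical in
noncomputable def equivIcc (hI : I ⊆ Icc 0 1) : Ecounter I (Icc 0 1 \ I) ≃ Icc (0 : ℝ) 1 :=
  Equiv.Set.sumDiffSubset hI

lemma rhoE_eq_dist_equivIcc (hI : I ⊆ Icc 0 1) (p q : Ecounter I (Icc 0 1 \ I)) :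
    rhoE p q = dist (equivIcc hI p) (equivIcc hI q) := by
  classical
  have hval : ∀ p, (equivIcc hI p : ℝ) = valE p := by
    rintro (a | a)
    · exact congrArg Subtype.val (Equiv.Set.sumDiffSubset_apply_inl hI a)
    · exact congrArg Subtype.val (Equiv.Set.sumDiffSubset_apply_inr hI a)
  rw [Subtype.dist_eq, hval, hval, Real.dist_eq, rhoE]

end Ecounter

theorem MeasureTheory.not_measurableSet_of_iSup_lt {α : Type*} [MeasurableSpace α]
    {μ : Measure α} {s : Set α}
    (h : (⨆ (B : Set α) (_ : MeasurableSet B) (_ : B ⊆ s), μ B) < μ s) :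
    ¬ MeasurableSet s := fun hs =>
  h.not_ge (le_iSup₂_of_le s hs (le_iSup_of_le subset_rfl le_rfl))

open Ecounter in
/-- Let `I ⊆ [0,1]` with `λ*(I) = 1` and `λ_*(I) = 0`, `J := [0,1] \ I`, and let
`E` be the disjoint union of `I` and `J` with metric `d` (usual distance on
each side, `1` across sides) and `ρ(p,q) = |x_p - x_q|`. Then `(E,d)` is a
separable metric space, `ρ` is continuous for `d` and positive definite, and
`ρ` is a metric on `E` making `E` a Polish space isometric to `[0,1]` with the
Euclidean metric, whose topology differs from the one generated by `d`. -/
theorem counterexample_space_properties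
    (I : Set ℝ) (hI : I ⊆ Set.Icc 0 1)
    (houter : (volume.restrict (Set.Icc (0 : ℝ) 1)) I = 1)
    (hinner : (⨆ (B : Set ℝ) (_ : MeasurableSet B) (_ : B ⊆ I),
      (volume.restrict (Set.Icc (0 : ℝ) 1)) B) = 0)
    (J : Set ℝ) (hJ : J = Set.Icc 0 1 \ I) :
    ∃ m : MetricSpace (Ecounter I J),
      (∀ p q, m.dist p q = dE p q) ∧
      (letI := m
       TopologicalSpace.SeparableSpace (Ecounter I J) ∧
       Continuous (fun pq : Ecounter I J × Ecounter I J => rhoE pq.1 pq.2)) ∧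
      (∀ p q : Ecounter I J, rhoE p q = 0 ↔ p = q) ∧
      ∃ mρ : MetricSpace (Ecounter I J),
        (∀ p q, mρ.dist p q = rhoE p q) ∧
        (letI := mρ
         PolishSpace (Ecounter I J)) ∧
        (∃ e : Ecounter I J ≃ Set.Icc (0 : ℝ) 1,
          ∀ p q, rhoE p q = dist (e p) (e q)) ∧
        m.toUniformSpace.toTopologicalSpace ≠ mρ.toUniformSpace.toTopologicalSpace := by
  subst hJ
  have hJ : Icc 0 1 \ I ⊆ Icc 0 1 := sdiff_subset
  have hIJ : Disjoint I (Icc 0 1 \ I) := disjoint_sdiff_right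
  have hI_nonmeas : ¬ MeasurableSet I :=
    not_measurableSet_of_iSup_lt (by rw [houter, hinner]; exact zero_lt_one)
  refine ⟨metricSpaceDE hI hJ, fun _ _ => rfl,
    ⟨separableSpace_dE hI hJ, continuous_rhoE_dE hI hJ⟩, fun _ _ => rhoE_eq_zero_iff hIJ,
    metricSpaceRhoE hIJ, fun _ _ => rfl, polishSpace_rhoE hIJ ?_,
    ⟨equivIcc hI, rhoE_eq_dist_equivIcc hI⟩, fun htop => ?_⟩
  · rw [union_sdiff_cancel hI]
    exact isClosed_Icc
  · have hopen := isOpen_range_inl_dE hI hJ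
    rw [htop] at hopen
    obtain ⟨U, hU, hUI⟩ := exists_isOpen_inter_eq_of_isOpen_range_inl_rhoE hIJ hopen
    rw [union_sdiff_cancel hI] at hUI
    exact hI_nonmeas (hUI ▸ hU.measurableSet.inter measurableSet_Icc)
end
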